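/- Let n ≥ 2, k > 0 and for each i let p_i > 0, q_i − p_i > 0, η_i > 0, ζ_i ≥ 0. With β_{ζ,k}^{(p,q)}(φ; η) as above and β_k(φ) the plain beta k-integral over the simplex, one has β_{ζ,k}^{(p,q)}(φ; η) ≤ β_k(φ) · ∏_{i=1}^n e^{−η_i^k/k} ₁F_{1,k}(q_i − p_i; q_i; η_i^k/k + ζ_i^k/η_i^k). -/

import Mathlib

/-!
Each factor of the integrand is bounded uniformly in `t ∈ (0, 1]`. With `c = η^k/k`, the argument
`-X = -(η^k/(k t) + ζ^k t/η^k)` satisfies `c ≤ X`, so monotonicity of `₁F_{1,k}` in its argument and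
Kummer's transformation give
`₁F_{1,k}(p;q;-X) ≤ ₁F_{1,k}(p;q;-c) = e^{-c} ₁F_{1,k}(q-p;q;c)
  ≤ e^{-c} ₁F_{1,k}(q-p;q;c + ζ^k/η^k)`.
Integrating against the Dirichlet density then needs only its integrability on the simplex, which
follows by Fubini in the last coordinate: the inner integral is a rescaled Beta integral.
-/

open MeasureTheory Real Set

noncomputable section

/-- Open standard (n-1)-simplex in ℝ^{n-1}. -/
def simplexInt (n : ℕ) : Set (Fin (n-1) → ℝ) :=
  {t | (∀ i, 0 < t i) ∧ ∑ i, t i < 1}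

/-- Barycentric coordinates: `t_1, …, t_{n-1}` and `t_n = 1 - ∑_{i<n} t_i`. -/
def bary (n : ℕ) (t : Fin (n-1) → ℝ) (i : Fin n) : ℝ :=
  if h : (i : ℕ) < n - 1 then t ⟨i, h⟩ else 1 - ∑ j, t j

/-- Product of the n barycentric coordinates. -/
def piT (n : ℕ) (t : Fin (n-1) → ℝ) : ℝ := ∏ i : Fin n, bary n t i

/-- Euler-integral confluent hypergeometric k-function ₁F_{1,k}(a;b;l). -/
def F1k (k a b l : ℝ) : ℝ :=
  (1/k) * (Real.Gamma b / (Real.Gamma a * Real.Gamma (b-a))) *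
    ∫ u in Set.Ioo (0:ℝ) 1, u ^ (a/k - 1) * (1-u) ^ ((b-a)/k - 1) * Real.exp (l*u)

/-- Beta k-function of n variables. -/
def betaK (n : ℕ) (k : ℝ) (φ : Fin n → ℝ) : ℝ :=
  (1/k^(n-1)) * ∫ t in simplexInt n, ∏ i, bary n t i ^ (φ i / k - 1)

/-- Extended beta k-function β_k(φ; η). -/
def betaKe (n : ℕ) (k : ℝ) (φ : Fin n → ℝ) (η : ℝ) : ℝ :=
  (1/k^(n-1)) * ∫ t in simplexInt n,
    (∏ i, bary n t i ^ (φ i / k - 1)) * Real.exp (-(η^k)/(k * piT n t))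

/-- Generalized beta k-function of the first kind. -/
def betaFirst (n : ℕ) (k a b η ζ : ℝ) (φ : Fin n → ℝ) : ℝ :=
  (1/k^(n-1)) * ∫ t in simplexInt n,
    (∏ i, bary n t i ^ (φ i / k - 1)) *
      F1k k a b (-(η^k)/(k * piT n t) - ζ^k * piT n t / η^k)

/-- Generalized beta k-function of the second kind. -/
def betaSecond (n : ℕ) (k : ℝ) (p q η ζ φ : Fin n → ℝ) : ℝ :=
  (1/k^(n-1)) * ∫ t in simplexInt n,
    ∏ i, (bary n t i ^ (φ i / k - 1) *
      F1k k (p i) (q i) (-((η i)^k)/(k * bary n t i) - (ζ i)^k * bary n t i / (η i)^k))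

/-- Extended beta k-function of the second kind (vector η). -/
def betaKe2 (n : ℕ) (k : ℝ) (φ η : Fin n → ℝ) : ℝ :=
  (1/k^(n-1)) * ∫ t in simplexInt n,
    ∏ i, (bary n t i ^ (φ i / k - 1) * Real.exp (-((η i)^k)/(k * bary n t i)))

end

open scoped ENNReal NNReal

theorem lintegral_Ioo_rpow_mul_one_sub_rpow {α β : ℝ} (hα : 0 < α) (hβ : 0 < β) :
    ∫⁻ x in Ioo (0 : ℝ) 1, ENNReal.ofReal (x ^ (α - 1) * (1 - x) ^ (β - 1)) =
      ENNReal.ofReal (ProbabilityTheory.beta α β) := by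
  have hB := ProbabilityTheory.beta_pos hα hβ
  have h := ProbabilityTheory.lintegral_betaPDF_eq_one hα hβ
  simp_rw [ProbabilityTheory.lintegral_betaPDF, mul_assoc,
    ENNReal.ofReal_mul (one_div_pos.2 hB).le] at h
  rw [lintegral_const_mul' _ _ ENNReal.ofReal_ne_top, mul_comm] at h
  rw [ENNReal.eq_inv_of_mul_eq_one_left h, one_div, ENNReal.ofReal_inv_of_pos hB, inv_inv]

theorem integrableOn_rpow_mul_one_sub_rpow {α β : ℝ} (hα : 0 < α) (hβ : 0 < β) :
    IntegrableOn (fun x : ℝ => x ^ (α - 1) * (1 - x) ^ (β - 1)) (Ioo 0 1) := by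
  refine ⟨by fun_prop, (hasFiniteIntegral_iff_ofReal ?_).2 ?_⟩
  · filter_upwards [ae_restrict_mem measurableSet_Ioo] with x hx
    have : 0 < 1 - x := sub_pos.2 hx.2
    have := hx.1
    positivity
  · rw [lintegral_Ioo_rpow_mul_one_sub_rpow hα hβ]
    exact ENNReal.ofReal_lt_top

theorem lintegral_Ioo_rpow_mul_sub_rpow {α β M : ℝ} (hα : 0 < α) (hβ : 0 < β) (hM : 0 < M) :
    ∫⁻ x in Ioo 0 M, ENNReal.ofReal (x ^ (α - 1) * (M - x) ^ (β - 1)) =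
      ENNReal.ofReal (M ^ (α + β - 1) * ProbabilityTheory.beta α β) := by
  have himage : (M * ·) '' Ioo 0 1 = Ioo 0 M := by
    rw [image_mul_left_Ioo hM, mul_zero, mul_one]
  rw [← himage, lintegral_image_eq_lintegral_abs_deriv_mul measurableSet_Ioo
    (f' := fun _ => M) (fun x _ => (hasDerivAt_const_mul M).hasDerivWithinAt)
    (mul_right_injective₀ hM.ne').injOn]
  rw [setLIntegral_congr_fun measurableSet_Ioo (g := fun u => ENNReal.ofReal (M ^ (α + β - 1)) *
      ENNReal.ofReal (u ^ (α - 1) * (1 - u) ^ (β - 1))),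
    lintegral_const_mul' _ _ ENNReal.ofReal_ne_top, lintegral_Ioo_rpow_mul_one_sub_rpow hα hβ,
    ← ENNReal.ofReal_mul (by positivity)]
  intro u hu
  have hu1 : 0 < 1 - u := sub_pos.2 hu.2
  simp only [abs_of_pos hM]
  rw [← ENNReal.ofReal_mul hM.le, ← ENNReal.ofReal_mul (by positivity)]
  congr 1
  rw [← mul_one_sub, mul_rpow hM.le hu.1.le, mul_rpow hM.le hu1.le,
    show α + β - 1 = 1 + (α - 1) + (β - 1) by ring, rpow_add hM, rpow_add hM, rpow_one]
  ring

theorem integrableOn_rpow_mul_one_sub_rpow_mul_exp {α β : ℝ} (hα : 0 < α) (hβ : 0 < β) (l : ℝ) :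
    IntegrableOn (fun u : ℝ => u ^ (α - 1) * (1 - u) ^ (β - 1) * exp (l * u)) (Ioo 0 1) :=
  (integrableOn_rpow_mul_one_sub_rpow hα hβ).mul_continuousOn_of_subset (by fun_prop)
    measurableSet_Ioo isCompact_Icc Ioo_subset_Icc_self

theorem setIntegral_Ioo_zero_one_comp_one_sub {E : Type*} [NormedAddCommGroup E] [NormedSpace ℝ E]
    (f : ℝ → E) : ∫ u in Ioo (0 : ℝ) 1, f (1 - u) = ∫ u in Ioo (0 : ℝ) 1, f u := by
  simp only [← integral_Ioc_eq_integral_Ioo, ← intervalIntegral.integral_of_le zero_le_one]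
  simp [intervalIntegral.integral_comp_sub_left f (1 : ℝ)]

section F1k

variable {k a b : ℝ}

/-- Kummer's transformation. -/
theorem F1k_eq_exp_mul_F1k (k a b l : ℝ) : F1k k a b l = exp l * F1k k (b - a) b (-l) := by
  have hreflect :
      ∫ u in Ioo (0 : ℝ) 1, u ^ (a / k - 1) * (1 - u) ^ ((b - a) / k - 1) * exp (l * u) =
        exp l *
          ∫ u in Ioo (0 : ℝ) 1, u ^ ((b - a) / k - 1) * (1 - u) ^ (a / k - 1) * exp (-l * u) := by
    rw [← integral_const_mul, ← setIntegral_Ioo_zero_one_comp_one_sub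
      (fun u => u ^ (a / k - 1) * (1 - u) ^ ((b - a) / k - 1) * exp (l * u))]
    refine setIntegral_congr_fun measurableSet_Ioo fun u _ => ?_
    rw [sub_sub_cancel, show l * (1 - u) = l + -l * u by ring, exp_add]
    ring
  simp only [F1k, sub_sub_cancel, hreflect]
  ring

theorem F1k_coeff_nonneg (hk : 0 < k) (ha : 0 < a) (hba : 0 < b - a) :
    0 ≤ 1 / k * (Gamma b / (Gamma a * Gamma (b - a))) := by
  have := Gamma_pos_of_pos ha
  have := Gamma_pos_of_pos hba
  have := Gamma_pos_of_pos (show 0 < b by linarith)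
  positivity

theorem F1k_nonneg (hk : 0 < k) (ha : 0 < a) (hba : 0 < b - a) (l : ℝ) : 0 ≤ F1k k a b l := by
  refine mul_nonneg (F1k_coeff_nonneg hk ha hba) (setIntegral_nonneg measurableSet_Ioo ?_)
  intro u hu
  have : 0 < 1 - u := sub_pos.2 hu.2
  have := hu.1
  positivity

theorem F1k_mono (hk : 0 < k) (ha : 0 < a) (hba : 0 < b - a) : Monotone (F1k k a b) := by
  intro l l' hl
  refine mul_le_mul_of_nonneg_left (setIntegral_mono_on
    (integrableOn_rpow_mul_one_sub_rpow_mul_exp (by positivity) (by positivity) l)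
    (integrableOn_rpow_mul_one_sub_rpow_mul_exp (by positivity) (by positivity) l')
    measurableSet_Ioo fun u hu => ?_) (F1k_coeff_nonneg hk ha hba)
  have : 0 < 1 - u := sub_pos.2 hu.2
  have := hu.1
  gcongr

theorem F1k_neg_le (hk : 0 < k) (ha : 0 < a) (hba : 0 < b - a) {x c m : ℝ}
    (hcx : c ≤ x) (hcm : c ≤ m) : F1k k a b (-x) ≤ exp (-c) * F1k k (b - a) b m := by
  have hba' : 0 < b - (b - a) := by rwa [sub_sub_cancel]
  calc F1k k a b (-x) ≤ F1k k a b (-c) := F1k_mono hk ha hba (neg_le_neg hcx)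
    _ = exp (-c) * F1k k (b - a) b c := by rw [F1k_eq_exp_mul_F1k, neg_neg]
    _ ≤ exp (-c) * F1k k (b - a) b m := by gcongr; exact F1k_mono hk hba hba' hcm

end F1k

theorem volume_preserving_snoc (α : Type*) [MeasureSpace α] [SigmaFinite (volume : Measure α)]
    (m : ℕ) : MeasurePreserving (fun p : α × (Fin m → α) => (Fin.snoc p.2 p.1 : Fin (m + 1) → α))
      volume volume := by
  have h := (volume_preserving_piFinSuccAbove (fun _ : Fin (m + 1) => α) (Fin.last m)).symm
  have he : ⇑(MeasurableEquiv.piFinSuccAbove (fun _ : Fin (m + 1) => α) (Fin.last m)).symm =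
      fun p => Fin.snoc p.2 p.1 :=
    funext fun p => Fin.insertNth_last' p.1 p.2
  rwa [he] at h

theorem lintegral_eq_lintegral_lintegral_snoc {α : Type*} [MeasureSpace α]
    [SigmaFinite (volume : Measure α)] {m : ℕ} {F : (Fin (m + 1) → α) → ℝ≥0∞} (hF : Measurable F) :
    ∫⁻ t, F t = ∫⁻ y : Fin m → α, ∫⁻ x : α, F (Fin.snoc y x) := by
  have hsnoc := volume_preserving_snoc α m
  rw [← hsnoc.lintegral_comp hF, Measure.volume_eq_prod]
  exact lintegral_prod_symm _ (hF.comp hsnoc.measurable).aemeasurable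

def openSimplex (m : ℕ) (c : ℝ) : Set (Fin m → ℝ) := {t | (∀ i, 0 < t i) ∧ ∑ i, t i < c}

noncomputable def dirichletDensity {m : ℕ} (a : Fin m → ℝ) (b c : ℝ) (t : Fin m → ℝ) : ℝ :=
  (∏ i, t i ^ (a i - 1)) * (c - ∑ i, t i) ^ (b - 1)

theorem measurableSet_openSimplex (m : ℕ) (c : ℝ) : MeasurableSet (openSimplex m c) := by
  rw [openSimplex, ofPred_and, ofPred_forall]
  exact (MeasurableSet.iInter fun i =>
    measurableSet_lt measurable_const (measurable_pi_apply i)).inter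
      (measurableSet_lt (by fun_prop) measurable_const)

theorem measurable_dirichletDensity {m : ℕ} (a : Fin m → ℝ) (b c : ℝ) :
    Measurable (dirichletDensity a b c) := by
  unfold dirichletDensity
  fun_prop

theorem snoc_mem_openSimplex_iff {m : ℕ} {c x : ℝ} {y : Fin m → ℝ} :
    (Fin.snoc y x : Fin (m + 1) → ℝ) ∈ openSimplex (m + 1) c ↔
      y ∈ openSimplex m c ∧ x ∈ Ioo 0 (c - ∑ i, y i) := by
  simp only [openSimplex, mem_ofPred_eq, Fin.forall_fin_succ', Fin.snoc_castSucc, Fin.snoc_last,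
    Fin.sum_univ_castSucc, mem_Ioo]
  constructor
  · rintro ⟨⟨hy, hx⟩, hsum⟩
    exact ⟨⟨hy, by linarith⟩, hx, by linarith⟩
  · rintro ⟨⟨hy, -⟩, hx, hsum⟩
    exact ⟨⟨hy, hx⟩, by linarith⟩

theorem dirichletDensity_snoc {m : ℕ} (a : Fin (m + 1) → ℝ) (b c x : ℝ) (y : Fin m → ℝ) :
    dirichletDensity a b c (Fin.snoc y x) =
      (∏ i, y i ^ (a (Fin.castSucc i) - 1)) *
        (x ^ (a (Fin.last m) - 1) * (c - ∑ i, y i - x) ^ (b - 1)) := by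
  simp only [dirichletDensity, Fin.prod_univ_castSucc, Fin.sum_univ_castSucc, Fin.snoc_castSucc,
    Fin.snoc_last, sub_add_eq_sub_sub, mul_assoc]

theorem lintegral_indicator_dirichletDensity_snoc {m : ℕ} {a : Fin (m + 1) → ℝ}
    (ha : 0 < a (Fin.last m)) {b : ℝ} (hb : 0 < b) (c : ℝ) (y : Fin m → ℝ) :
    ∫⁻ x, (openSimplex (m + 1) c).indicator
        (fun t => ENNReal.ofReal (dirichletDensity a b c t)) (Fin.snoc y x) =
      (openSimplex m c).indicator (fun y => ENNReal.ofReal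
        (dirichletDensity (fun i => a (Fin.castSucc i)) (a (Fin.last m) + b) c y)) y *
        ENNReal.ofReal (ProbabilityTheory.beta (a (Fin.last m)) b) := by
  by_cases hy : y ∈ openSimplex m c
  · have hM : 0 < c - ∑ i, y i := sub_pos.2 hy.2
    have hP : 0 ≤ ∏ i, y i ^ (a (Fin.castSucc i) - 1) :=
      Finset.prod_nonneg fun i _ => (rpow_pos_of_pos (hy.1 i) _).le
    have hslice : ∀ x, (openSimplex (m + 1) c).indicator
        (fun t => ENNReal.ofReal (dirichletDensity a b c t)) (Fin.snoc y x) =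
        (Ioo 0 (c - ∑ i, y i)).indicator
          (fun x => ENNReal.ofReal (dirichletDensity a b c (Fin.snoc y x))) x := by
      intro x
      by_cases hx : x ∈ Ioo 0 (c - ∑ i, y i)
      · rw [indicator_of_mem (snoc_mem_openSimplex_iff.2 ⟨hy, hx⟩), indicator_of_mem hx]
      · rw [indicator_of_notMem (fun h => hx (snoc_mem_openSimplex_iff.1 h).2),
          indicator_of_notMem hx]
    simp_rw [hslice]
    rw [indicator_of_mem hy, lintegral_indicator measurableSet_Ioo]
    simp_rw [dirichletDensity_snoc, ENNReal.ofReal_mul hP]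
    rw [lintegral_const_mul' _ _ ENNReal.ofReal_ne_top,
      lintegral_Ioo_rpow_mul_sub_rpow ha hb hM, dirichletDensity,
      ← ENNReal.ofReal_mul hP, ← ENNReal.ofReal_mul (by positivity), mul_assoc]
  · simp [snoc_mem_openSimplex_iff, hy]

theorem exists_lintegral_openSimplex_dirichletDensity (m : ℕ) {a : Fin m → ℝ} (ha : ∀ i, 0 < a i)
    {b : ℝ} (hb : 0 < b) : ∃ C : ℝ≥0, ∀ c, 0 < c →
      ∫⁻ t in openSimplex m c, ENNReal.ofReal (dirichletDensity a b c t) =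
        ENNReal.ofReal (c ^ (∑ i, a i + b - 1)) * C := by
  induction m generalizing b with
  | zero =>
    refine ⟨1, fun c hc => ?_⟩
    have huniv : openSimplex 0 c = univ := by simp [openSimplex, hc]
    simp [huniv, dirichletDensity, volume_pi]
  | succ m ih =>
    obtain ⟨C, hC⟩ := ih (a := fun i => a (Fin.castSucc i)) (fun i => ha _)
      (add_pos (ha (Fin.last m)) hb)
    refine ⟨C * (ProbabilityTheory.beta (a (Fin.last m)) b).toNNReal, fun c hc => ?_⟩
    have hF : Measurable ((openSimplex (m + 1) c).indicator
        fun t => ENNReal.ofReal (dirichletDensity a b c t)) :=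
      (measurable_dirichletDensity a b c).ennreal_ofReal.indicator (measurableSet_openSimplex _ _)
    calc ∫⁻ t in openSimplex (m + 1) c, ENNReal.ofReal (dirichletDensity a b c t)
        = ∫⁻ y, ∫⁻ x, (openSimplex (m + 1) c).indicator
            (fun t => ENNReal.ofReal (dirichletDensity a b c t)) (Fin.snoc y x) := by
          rw [← lintegral_indicator (measurableSet_openSimplex _ _),
            lintegral_eq_lintegral_lintegral_snoc hF]
      _ = (∫⁻ y in openSimplex m c, ENNReal.ofReal
            (dirichletDensity (fun i => a (Fin.castSucc i)) (a (Fin.last m) + b) c y)) *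
            ENNReal.ofReal (ProbabilityTheory.beta (a (Fin.last m)) b) := by
          simp_rw [lintegral_indicator_dirichletDensity_snoc (ha _) hb]
          rw [lintegral_mul_const' _ _ ENNReal.ofReal_ne_top,
            lintegral_indicator (measurableSet_openSimplex _ _)]
      _ = ENNReal.ofReal (c ^ (∑ i, a i + b - 1)) *
            ↑(C * (ProbabilityTheory.beta (a (Fin.last m)) b).toNNReal) := by
          rw [hC c hc, ENNReal.coe_mul, Fin.sum_univ_castSucc, add_assoc, mul_assoc]
          rfl

theorem dirichletDensity_nonneg {m : ℕ} (a : Fin m → ℝ) (b : ℝ) {c : ℝ} {t : Fin m → ℝ}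
    (ht : t ∈ openSimplex m c) : 0 ≤ dirichletDensity a b c t :=
  mul_nonneg (Finset.prod_nonneg fun i _ => (rpow_pos_of_pos (ht.1 i) _).le)
    (rpow_nonneg (sub_pos.2 ht.2).le _)

theorem integrableOn_openSimplex_dirichletDensity (m : ℕ) {a : Fin m → ℝ} (ha : ∀ i, 0 < a i)
    {b c : ℝ} (hb : 0 < b) (hc : 0 < c) :
    IntegrableOn (dirichletDensity a b c) (openSimplex m c) := by
  refine ⟨(measurable_dirichletDensity a b c).aestronglyMeasurable,
    (hasFiniteIntegral_iff_ofReal ?_).2 ?_⟩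
  · filter_upwards [ae_restrict_mem (measurableSet_openSimplex m c)] with t ht
    exact dirichletDensity_nonneg a b ht
  · obtain ⟨C, hC⟩ := exists_lintegral_openSimplex_dirichletDensity m ha hb
    rw [hC c hc]
    exact ENNReal.mul_lt_top ENNReal.ofReal_lt_top ENNReal.coe_lt_top

theorem bary_succ (m : ℕ) (t : Fin m → ℝ) : bary (m + 1) t = Fin.snoc t (1 - ∑ j, t j) := by
  funext i
  induction i using Fin.lastCases with
  | last => simp [bary]
  | cast j => simp [bary]

theorem prod_bary_succ_rpow {m : ℕ} (a : Fin (m + 1) → ℝ) (t : Fin m → ℝ) :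
    ∏ i, bary (m + 1) t i ^ (a i - 1) =
      dirichletDensity (fun j => a (Fin.castSucc j)) (a (Fin.last m)) 1 t := by
  simp [bary_succ, dirichletDensity, Fin.prod_univ_castSucc]

theorem integrableOn_simplexInt_prod_bary_rpow (n : ℕ) {a : Fin n → ℝ} (ha : ∀ i, 0 < a i) :
    IntegrableOn (fun t => ∏ i, bary n t i ^ (a i - 1)) (simplexInt n) := by
  cases n with
  | zero => simp
  | succ m =>
    simp_rw [prod_bary_succ_rpow]
    exact integrableOn_openSimplex_dirichletDensity m (fun j => ha _) (ha _) one_pos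

theorem bary_mem_Ioc {n : ℕ} {t : Fin (n - 1) → ℝ} (ht : t ∈ simplexInt n) (i : Fin n) :
    bary n t i ∈ Ioc 0 1 := by
  have hsum : 0 ≤ ∑ j, t j := Finset.sum_nonneg fun j _ => (ht.1 j).le
  unfold bary
  split_ifs with h
  · exact ⟨ht.1 _, (Finset.single_le_sum (fun j _ => (ht.1 j).le) (Finset.mem_univ _)).trans
      ht.2.le⟩
  · exact ⟨sub_pos.2 ht.2, by linarith⟩

theorem F1k_le_of_mem_Ioc {k a b : ℝ} (hk : 0 < k) (ha : 0 < a) (hba : 0 < b - a) {A B s : ℝ}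
    (hA : 0 ≤ A) (hB : 0 ≤ B) (hs : s ∈ Ioc 0 1) :
    F1k k a b (-A / (k * s) - B * s) ≤ exp (-A / k) * F1k k (b - a) b (A / k + B) := by
  have hAs : A / k ≤ A / (k * s) :=
    div_le_div_of_nonneg_left hA (by have := hs.1; positivity) (mul_le_of_le_one_right hk.le hs.2)
  rw [neg_div, neg_div, sub_eq_add_neg, ← neg_add]
  refine F1k_neg_le hk ha hba ?_ (le_add_of_nonneg_right hB)
  nlinarith [hs.1]

theorem stmt18_general (n : ℕ) (k : ℝ) (hk : 0 < k)
    (p q η ζ : Fin n → ℝ)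
    (hp : ∀ i, 0 < p i) (hqp : ∀ i, 0 < q i - p i)
    (hη : ∀ i, 0 < η i) (hζ : ∀ i, 0 ≤ ζ i)
    (φ : Fin n → ℝ) (hφ : ∀ i, 0 < φ i) :
    betaSecond n k p q η ζ φ ≤
      betaK n k φ * ∏ i, Real.exp (-((η i)^k)/k) *
        F1k k (q i - p i) (q i) ((η i)^k/k + (ζ i)^k/(η i)^k) := by
  have hfactor : ∀ t ∈ simplexInt n, ∀ i,
      F1k k (p i) (q i) (-((η i)^k)/(k * bary n t i) - (ζ i)^k * bary n t i / (η i)^k) ≤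
        Real.exp (-((η i)^k)/k) * F1k k (q i - p i) (q i) ((η i)^k/k + (ζ i)^k/(η i)^k) := by
    intro t ht i
    rw [mul_div_right_comm]
    exact F1k_le_of_mem_Ioc hk (hp i) (hqp i) (rpow_nonneg (hη i).le k)
      (div_nonneg (rpow_nonneg (hζ i) k) (rpow_nonneg (hη i).le k)) (bary_mem_Ioc ht i)
  have hint := integrableOn_simplexInt_prod_bary_rpow n (a := fun i => φ i / k)
    fun i => div_pos (hφ i) hk
  have hbary_rpow : ∀ t ∈ simplexInt n, ∀ i, 0 ≤ bary n t i ^ (φ i / k - 1) :=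
    fun t ht i => rpow_nonneg (bary_mem_Ioc ht i).1.le _
  unfold betaSecond betaK
  rw [mul_assoc, ← integral_mul_const]
  refine mul_le_mul_of_nonneg_left (integral_mono_of_nonneg ?_ (hint.mul_const _) ?_)
    (by positivity)
  all_goals filter_upwards [ae_restrict_mem (measurableSet_openSimplex (n - 1) 1)] with t ht
  · exact Finset.prod_nonneg fun i _ =>
      mul_nonneg (hbary_rpow t ht i) (F1k_nonneg hk (hp i) (hqp i) _)
  · rw [← Finset.prod_mul_distrib]
    exact Finset.prod_le_prod
      (fun i _ => mul_nonneg (hbary_rpow t ht i) (F1k_nonneg hk (hp i) (hqp i) _))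
      (fun i _ => mul_le_mul_of_nonneg_left (hfactor t ht i) (hbary_rpow t ht i))

theorem stmt18 (n : ℕ) (hn : 2 ≤ n) (k : ℝ) (hk : 0 < k)
    (p q η ζ : Fin n → ℝ)
    (hp : ∀ i, 0 < p i) (hqp : ∀ i, 0 < q i - p i)
    (hη : ∀ i, 0 < η i) (hζ : ∀ i, 0 ≤ ζ i)
    (φ : Fin n → ℝ) (hφ : ∀ i, 0 < φ i) :
    betaSecond n k p q η ζ φ ≤
      betaK n k φ * ∏ i, Real.exp (-((η i)^k)/k) *
        F1k k (q i - p i) (q i) ((η i)^k/k + (ζ i)^k/(η i)^k) :=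
  stmt18_general n k hk p q η ζ hp hqp hη hζ φ hφ
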